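/- Let F ⊆ 𝓕 be a pre-skeleton, let U := {i ∈ 𝓕 : dist(i, F) ≥ 6}, suppose U ≠ ∅, and let i ∈ U satisfy |N(i)| ≥ |N(i')| for all i' ∈ U. Then F is a skeleton, or F ∪ {i} is a pre-skeleton. -/

import Mathlib

variable {V : Type*}

/-- A feasible distance-1 assignment in the bipartite graph `G` with clients
`𝓓`, facilities `𝓕`, lower bounds `L`, and bounds `k` (centers) and `m`
(outliers): `Fstar ⊆ 𝓕` with `|Fstar| ≤ k`, every client is assigned to an
adjacent center of `Fstar` or designated an outlier (`none`), each center of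
`Fstar` serves at least `L i` clients, and at most `m` clients are outliers. -/
def FeasibleDist1Assign [Fintype V] [DecidableEq V] (G : SimpleGraph V)
    (𝓓 𝓕 : Finset V) (L : V → ℕ) (k m : ℕ)
    (Fstar : Finset V) (σ : V → Option V) : Prop :=
  Fstar ⊆ 𝓕 ∧ Fstar.card ≤ k ∧
  (∀ j ∈ 𝓓, ∀ i, σ j = some i → i ∈ Fstar ∧ G.Adj j i) ∧
  (∀ i ∈ Fstar, L i ≤ (𝓓.filter fun j => σ j = some i).card) ∧
  (𝓓.filter fun j => σ j = none).card ≤ m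

/-- Separation property: the vertices of `F` are at pairwise distance ≥ 6. -/
def SeparationProp (G : SimpleGraph V) (F : Finset V) : Prop :=
  ∀ i ∈ F, ∀ i' ∈ F, i ≠ i' → 6 ≤ G.edist i i'

/-- Covering property of `F` with respect to `Fstar`: every `i* ∈ Fstar` is at
distance at most 4 from `F`. -/
def CoveringProp (G : SimpleGraph V) (F Fstar : Finset V) : Prop :=
  ∀ istar ∈ Fstar, ∃ i ∈ F, G.edist istar i ≤ 4

/-- Injection property of `F` with respect to `Fstar`: there is a map
`f : F → Fstar` with `dist(i, f i) ≤ 2` for all `i ∈ F`. -/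
def InjectionProp (G : SimpleGraph V) (F Fstar : Finset V) : Prop :=
  ∃ f : V → V, ∀ i ∈ F, f i ∈ Fstar ∧ G.edist i (f i) ≤ 2

/-- `F` is a pre-skeleton: it satisfies separation, and the injection property
with respect to some feasible distance-1 assignment. -/
def IsPreSkeleton [Fintype V] [DecidableEq V] (G : SimpleGraph V)
    (𝓓 𝓕 : Finset V) (L : V → ℕ) (k m : ℕ) (F : Finset V) : Prop :=
  SeparationProp G F ∧
  ∃ Fstar σ, FeasibleDist1Assign G 𝓓 𝓕 L k m Fstar σ ∧ InjectionProp G F Fstar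

/-- `F` is a skeleton: it satisfies separation, and both the covering and the
injection properties with respect to some feasible distance-1 assignment. -/
def IsSkeleton [Fintype V] [DecidableEq V] (G : SimpleGraph V)
    (𝓓 𝓕 : Finset V) (L : V → ℕ) (k m : ℕ) (F : Finset V) : Prop :=
  SeparationProp G F ∧
  ∃ Fstar σ, FeasibleDist1Assign G 𝓓 𝓕 L k m Fstar σ ∧
    CoveringProp G F Fstar ∧ InjectionProp G F Fstar

/-!
If `F` is not a skeleton for the assignment `(Fstar, σ)` witnessing the pre-skeleton, some centre
`istar ∈ Fstar` is at distance > 4 from `F`, hence ≥ 6 by bipartite parity; so `istar ∈ U` and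
`|N(istar)| ≤ |N(i)|`. If a centre lies within distance 2 of `i`, the injection extends by sending
`i` there. Otherwise all neighbours of `i` are outliers, and exchanging `istar` for `i` (serving
`N(i)` from `i`, turning the clients of `istar` into outliers) keeps the assignment feasible; the
old injection avoids `istar` and extends by `i ↦ i`.
-/

namespace SimpleGraph

variable {G : SimpleGraph V} {s t : Set V} {u v : V}

theorem IsBipartiteWith.even_length_walk (h : G.IsBipartiteWith s t) (hu : u ∈ s) (hv : v ∈ s)
    (p : G.Walk u v) : Even p.length := by
  classical
  let c : G.Coloring Bool := Coloring.mk (fun x => decide (x ∈ s)) fun {x y} hxy => by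
    rcases h.mem_of_adj hxy with ⟨hx, hy⟩ | ⟨hx, hy⟩
    · simp [hx, Set.disjoint_right.mp h.disjoint hy]
    · simp [hy, Set.disjoint_right.mp h.disjoint hx]
  exact (c.even_length_iff_congr p).2
    (show decide (u ∈ s) = true ↔ decide (v ∈ s) = true by simp [hu, hv])

theorem IsBipartiteWith.six_le_edist (h : G.IsBipartiteWith s t) (hu : u ∈ s) (hv : v ∈ s)
    (huv : 4 < G.edist u v) : 6 ≤ G.edist u v := by
  by_cases htop : G.edist u v = ⊤
  · simp [htop]
  obtain ⟨p, hp⟩ := exists_walk_of_edist_ne_top htop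
  rw [← hp] at huv ⊢
  obtain ⟨n, hn⟩ := h.even_length_walk hu hv p
  norm_cast at huv ⊢
  omega

end SimpleGraph

section Skeleton

variable {G : SimpleGraph V} {F Fstar : Finset V} {i c : V}

theorem SeparationProp.insert [DecidableEq V] (h : SeparationProp G F)
    (hi : ∀ x ∈ F, 6 ≤ G.edist i x) : SeparationProp G (insert i F) := by
  intro a ha b hb hab
  rcases Finset.mem_insert.mp ha with rfl | ha <;> rcases Finset.mem_insert.mp hb with hb | hb
  · exact absurd hb.symm hab
  · exact hi b hb
  · exact hb ▸ G.edist_comm ▸ hi a ha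
  · exact h a ha b hb hab

theorem InjectionProp.mono {Fstar' : Finset V} (h : InjectionProp G F Fstar)
    (hsub : Fstar ⊆ Fstar') : InjectionProp G F Fstar' :=
  let ⟨f, hf⟩ := h
  ⟨f, fun x hx => ⟨hsub (hf x hx).1, (hf x hx).2⟩⟩

theorem InjectionProp.insert [DecidableEq V] (h : InjectionProp G F Fstar) (hc : c ∈ Fstar)
    (hic : G.edist i c ≤ 2) : InjectionProp G (insert i F) Fstar := by
  obtain ⟨f, hf⟩ := h
  refine ⟨Function.update f i c, fun x hx => ?_⟩
  by_cases hxi : x = i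
  · subst hxi
    simpa using ⟨hc, hic⟩
  · simpa [hxi] using hf x ((Finset.mem_insert.mp hx).resolve_left hxi)

theorem InjectionProp.erase [DecidableEq V] (h : InjectionProp G F Fstar)
    (hfar : ∀ x ∈ F, 2 < G.edist c x) : InjectionProp G F (Fstar.erase c) := by
  obtain ⟨f, hf⟩ := h
  refine ⟨f, fun x hx => ⟨Finset.mem_erase.mpr ⟨fun hfx => ?_, (hf x hx).1⟩, (hf x hx).2⟩⟩
  have hxc := (hf x hx).2
  rw [hfx, G.edist_comm] at hxc
  exact (hfar x hx).not_ge hxc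

end Skeleton

section Exchange

variable [Fintype V] [DecidableEq V] {G : SimpleGraph V} [DecidableRel G.Adj]
  {𝓓 𝓕 : Finset V} {L : V → ℕ} {k m : ℕ} {Fstar : Finset V} {σ : V → Option V} {i istar : V}

theorem FeasibleDist1Assign.neighborFinset_subset_outliers
    (hσ : FeasibleDist1Assign G 𝓓 𝓕 L k m Fstar σ) (hG : G.IsBipartiteWith 𝓕 𝓓) (hi : i ∈ 𝓕)
    (hfar : ∀ c ∈ Fstar, 2 < G.edist i c) :
    G.neighborFinset i ⊆ 𝓓.filter fun j => σ j = none := by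
  intro j hj
  rw [SimpleGraph.mem_neighborFinset] at hj
  have hj𝓓 : j ∈ 𝓓 := hG.mem_of_mem_adj hi hj
  refine Finset.mem_filter.mpr ⟨hj𝓓, Option.eq_none_iff_forall_ne_some.mpr fun c hσj => ?_⟩
  obtain ⟨hc, hjc⟩ := hσ.2.2.1 j hj𝓓 c hσj
  have hic : G.edist i c ≤ 2 := by
    simpa using (SimpleGraph.Walk.cons hj (.cons hjc .nil)).edist_le
  exact (hfar c hc).not_ge hic

def exchangeAssign (G : SimpleGraph V) [DecidableRel G.Adj] (σ : V → Option V) (i istar : V) :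
    V → Option V :=
  fun j => if G.Adj i j then some i else if σ j = some istar then none else σ j

/-- The clients of `istar` that become outliers are at most `|N(istar)| ≤ |N(i)|` in number,
while the `|N(i)|` outliers around `i` are now served. -/
theorem FeasibleDist1Assign.card_outliers_exchangeAssign_le
    (hσ : FeasibleDist1Assign G 𝓓 𝓕 L k m Fstar σ)
    (hNi : G.neighborFinset i ⊆ 𝓓.filter fun j => σ j = none)
    (hdeg : (G.neighborFinset istar).card ≤ (G.neighborFinset i).card) :
    (𝓓.filter fun j => exchangeAssign G σ i istar j = none).card ≤
      (𝓓.filter fun j => σ j = none).card := by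
  set O := 𝓓.filter fun j => σ j = none
  set A := 𝓓.filter fun j => σ j = some istar
  have hA : A ⊆ G.neighborFinset istar := fun j hj => by
    obtain ⟨hj, hσj⟩ := Finset.mem_filter.mp hj
    exact (G.mem_neighborFinset _ _).mpr (hσ.2.2.1 j hj istar hσj).2.symm
  have hsub : (𝓓.filter fun j => exchangeAssign G σ i istar j = none) ⊆
      (O \ G.neighborFinset i) ∪ A := by
    intro j hj
    obtain ⟨hj, hσ'j⟩ := Finset.mem_filter.mp hj
    unfold exchangeAssign at hσ'j
    split_ifs at hσ'j with hij hjstar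
    · exact Finset.mem_union_right _ (Finset.mem_filter.mpr ⟨hj, hjstar⟩)
    · refine Finset.mem_union_left _
        (Finset.mem_sdiff.mpr ⟨Finset.mem_filter.mpr ⟨hj, hσ'j⟩, ?_⟩)
      simpa using hij
  have hNiO := Finset.card_le_card hNi
  have hAcard := Finset.card_le_card hA
  calc _ ≤ ((O \ G.neighborFinset i) ∪ A).card := Finset.card_le_card hsub
    _ ≤ (O \ G.neighborFinset i).card + A.card := Finset.card_union_le _ _
    _ = O.card - (G.neighborFinset i).card + A.card := by rw [Finset.card_sdiff_of_subset hNi]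
    _ ≤ O.card := by omega

theorem FeasibleDist1Assign.exchange (hσ : FeasibleDist1Assign G 𝓓 𝓕 L k m Fstar σ)
    (histar : istar ∈ Fstar) (hi : i ∈ 𝓕)
    (hNi : G.neighborFinset i ⊆ 𝓓.filter fun j => σ j = none)
    (hLi : L i ≤ (G.neighborFinset i).card)
    (hdeg : (G.neighborFinset istar).card ≤ (G.neighborFinset i).card) :
    FeasibleDist1Assign G 𝓓 𝓕 L k m (insert i (Fstar.erase istar))
      (exchangeAssign G σ i istar) := by
  have hout := (hσ.card_outliers_exchangeAssign_le hNi hdeg).trans hσ.2.2.2.2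
  obtain ⟨hsub, hcard, hadj, hlb, -⟩ := hσ
  refine ⟨Finset.insert_subset hi ((Finset.erase_subset _ _).trans hsub), ?_, ?_, ?_, hout⟩
  · calc (insert i (Fstar.erase istar)).card ≤ (Fstar.erase istar).card + 1 :=
          Finset.card_insert_le _ _
      _ = Fstar.card := Finset.card_erase_add_one histar
      _ ≤ k := hcard
  · intro j hj c hσ'j
    unfold exchangeAssign at hσ'j
    split_ifs at hσ'j with hij hjstar
    · cases hσ'j
      exact ⟨Finset.mem_insert_self _ _, hij.symm⟩
    · obtain ⟨hc, hjc⟩ := hadj j hj c hσ'j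
      refine ⟨Finset.mem_insert_of_mem (Finset.mem_erase.mpr ⟨?_, hc⟩), hjc⟩
      rintro rfl
      exact hjstar hσ'j
  · intro c hc
    rcases Finset.mem_insert.mp hc with rfl | hc
    · refine hLi.trans (Finset.card_le_card fun j hj => ?_)
      have hij := (G.mem_neighborFinset _ _).mp hj
      simpa [exchangeAssign, hij] using (Finset.mem_filter.mp (hNi hj)).1
    · obtain ⟨hne, hc⟩ := Finset.mem_erase.mp hc
      refine (hlb c hc).trans (Finset.card_le_card fun j hj => ?_)
      obtain ⟨hj, hσj⟩ := Finset.mem_filter.mp hj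
      have hij : ¬ G.Adj i j := fun hij => by
        simpa [hσj] using (Finset.mem_filter.mp (hNi ((G.mem_neighborFinset _ _).mpr hij))).2
      refine Finset.mem_filter.mpr ⟨hj, ?_⟩
      rw [exchangeAssign, if_neg hij, hσj, if_neg (by simpa using hne)]

end Exchange

theorem stmt_10 {V : Type*} [Fintype V] [DecidableEq V]
    (G : SimpleGraph V) [DecidableRel G.Adj]
    (𝓓 𝓕 : Finset V) (hdisj : Disjoint 𝓓 𝓕)
    (hbip : ∀ u v, G.Adj u v → (u ∈ 𝓓 ∧ v ∈ 𝓕) ∨ (u ∈ 𝓕 ∧ v ∈ 𝓓))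
    (L : V → ℕ) (hL : ∀ i ∈ 𝓕, L i ≤ (G.neighborFinset i).card)
    (k m : ℕ)
    (F : Finset V) (hFsub : F ⊆ 𝓕)
    (hpre : IsPreSkeleton G 𝓓 𝓕 L k m F)
    (U : Finset V)
    (hU : U = 𝓕.filter fun i => ∀ i' ∈ F, 6 ≤ G.edist i i')
    (i : V) (hiU : i ∈ U)
    (himax : ∀ i' ∈ U, (G.neighborFinset i').card ≤ (G.neighborFinset i).card) :
    IsSkeleton G 𝓓 𝓕 L k m F ∨ IsPreSkeleton G 𝓓 𝓕 L k m (insert i F) := by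
  obtain ⟨hsep, Fstar, σ, hσ, hinj⟩ := hpre
  by_cases hcov : CoveringProp G F Fstar
  · exact .inl ⟨hsep, Fstar, σ, hσ, hcov, hinj⟩
  subst hU
  obtain ⟨hi, hiF⟩ := Finset.mem_filter.mp hiU
  refine .inr ⟨hsep.insert hiF, ?_⟩
  by_cases hnear : ∃ c ∈ Fstar, G.edist i c ≤ 2
  · obtain ⟨c, hc, hic⟩ := hnear
    exact ⟨Fstar, σ, hσ, hinj.insert hc hic⟩
  unfold CoveringProp at hcov
  push Not at hcov hnear
  obtain ⟨istar, histar, hfar⟩ := hcov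
  have hG : G.IsBipartiteWith 𝓕 𝓓 :=
    ⟨Finset.disjoint_coe.mpr hdisj.symm, fun u v h => (hbip u v h).symm⟩
  have histar𝓕 : istar ∈ 𝓕 := hσ.1 histar
  have hdeg := himax istar <| Finset.mem_filter.mpr
    ⟨histar𝓕, fun x hx => hG.six_le_edist histar𝓕 (hFsub hx) (hfar x hx)⟩
  have hinj' : InjectionProp G F (Fstar.erase istar) :=
    hinj.erase fun x hx => lt_trans (by norm_num) (hfar x hx)
  refine ⟨_, _, hσ.exchange histar hi (hσ.neighborFinset_subset_outliers hG hi hnear) (hL i hi)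
    hdeg, ?_⟩
  exact (hinj'.mono (Finset.subset_insert _ _)).insert (Finset.mem_insert_self _ _) (by simp)
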